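/- arXiv:1602.05069 — 4 statements merged into one kernel-verified Lean document; each statement's English description precedes it below -/
import Mathlib

section
/- Let r ≥ 1 be an integer and d : Fin r → ℝ with d₁ ≥ d₂ ≥ ⋯ ≥ d_r > 0 (the eigenvalues, arranged in descending order, of the sample covariance matrix normalized by the noise power). Let ε > 0 satisfy ε ≤ min(1, 1/dᵢ) for every i. Define λ* by λᵢ* = min(1, 1/dᵢ). Then λ* belongs to the feasible set F = {λ : Fin r → ℝ | λ₁ ≤ λ₂ ≤ ⋯ ≤ λ_r and ε ≤ λᵢ ≤ 1 for all i}, and for every λ ∈ F one has Σᵢ dᵢ λᵢ* − Σᵢ log λᵢ* ≤ Σᵢ dᵢ λᵢ − Σᵢ log λᵢ; that is, λ* is a global minimizer of λ ↦ Σᵢ dᵢλᵢ − Σᵢ log λᵢ over F. -/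
/-!
The objective is separable, `∑ᵢ (dᵢ λᵢ - log λᵢ)`, and by `log t ≤ t - 1` each summand
`t ↦ dᵢ t - log t` is minimized over `(0, 1]` at `min 1 (1 / dᵢ)`. Since `d` is antitone these
pointwise minimizers are already increasing, so the ordering constraint is inactive.
-/

open Finset Real

lemma mul_min_one_one_div_sub_log_le {d x : ℝ} (hd : 0 < d) (hx : 0 < x) (hx1 : x ≤ 1) :
    d * min 1 (1 / d) - log (min 1 (1 / d)) ≤ d * x - log x := by
  have hlog_x : log x ≤ x - 1 := log_le_sub_one_of_pos hx
  rcases le_total (1 / d) 1 with h | h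
  · have hlog_dx : log (d * x) ≤ d * x - 1 := log_le_sub_one_of_pos (mul_pos hd hx)
    rw [log_mul hd.ne' hx.ne'] at hlog_dx
    rw [min_eq_right h, mul_one_div_cancel hd.ne', one_div, log_inv]
    linarith
  · have hd1 : d ≤ 1 := by rwa [le_div_iff₀ hd, one_mul] at h
    rw [min_eq_left h, log_one]
    nlinarith

lemma min_one_one_div_le_of_le {a b : ℝ} (ha : 0 < a) (hab : a ≤ b) :
    min 1 (1 / b) ≤ min 1 (1 / a) :=
  min_le_min le_rfl (one_div_le_one_div_of_le ha hab)

theorem rcml_closed_form_known_noise_general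
    (r : ℕ) (d : Fin r → ℝ)
    (hd_desc : ∀ i j : Fin r, i ≤ j → d j ≤ d i)
    (hd_pos : ∀ i, 0 < d i)
    (ε : ℝ) (hε : 0 < ε) (hεle : ∀ i, ε ≤ min 1 (1 / d i)) :
    ((∀ i j : Fin r, i ≤ j →
        min 1 (1 / d i) ≤ min 1 (1 / d j)) ∧
      (∀ i, ε ≤ min 1 (1 / d i) ∧ min 1 (1 / d i) ≤ 1)) ∧
    ∀ l : Fin r → ℝ,
      ((∀ i j : Fin r, i ≤ j → l i ≤ l j) ∧ (∀ i, ε ≤ l i ∧ l i ≤ 1)) →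
      (∑ i, d i * min 1 (1 / d i)) - (∑ i, Real.log (min 1 (1 / d i))) ≤
        (∑ i, d i * l i) - (∑ i, Real.log (l i)) := by
  refine ⟨⟨fun i j hij => min_one_one_div_le_of_le (hd_pos j) (hd_desc i j hij),
    fun i => ⟨hεle i, min_le_left _ _⟩⟩, fun l ⟨_, hbox⟩ => ?_⟩
  rw [← sum_sub_distrib, ← sum_sub_distrib]
  exact sum_le_sum fun i _ =>
    mul_min_one_one_div_sub_log_le (hd_pos i) (hε.trans_le (hbox i).1) (hbox i).2

/-- Lemma 3.1 (RCML, known noise level): `λᵢ* = min(1, 1/dᵢ)` is feasible and globally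
minimizes `λ ↦ Σᵢ dᵢλᵢ − Σᵢ log λᵢ` over the feasible set
`{λ | λ₁ ≤ ⋯ ≤ λ_r, ε ≤ λᵢ ≤ 1}`. -/
theorem rcml_closed_form_known_noise
    (r : ℕ) (hr : 1 ≤ r) (d : Fin r → ℝ)
    (hd_desc : ∀ i j : Fin r, i ≤ j → d j ≤ d i)
    (hd_pos : ∀ i, 0 < d i)
    (ε : ℝ) (hε : 0 < ε) (hεle : ∀ i, ε ≤ min 1 (1 / d i)) :
    ((∀ i j : Fin r, i ≤ j →
        min 1 (1 / d i) ≤ min 1 (1 / d j)) ∧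
      (∀ i, ε ≤ min 1 (1 / d i) ∧ min 1 (1 / d i) ≤ 1)) ∧
    ∀ l : Fin r → ℝ,
      ((∀ i j : Fin r, i ≤ j → l i ≤ l j) ∧ (∀ i, ε ≤ l i ∧ l i ≤ 1)) →
      (∑ i, d i * min 1 (1 / d i)) - (∑ i, Real.log (min 1 (1 / d i))) ≤
        (∑ i, d i * l i) - (∑ i, Real.log (l i)) :=
  rcml_closed_form_known_noise_general r d hd_desc hd_pos ε hε hεle
end

section
/- Let r ≥ 1 be an integer, d : Fin r → ℝ with d₁ ≥ d₂ ≥ ⋯ ≥ d_r > 0, and let c̄ > 0 be a fixed noise-level variable. Let ε > 0 satisfy ε ≤ min(1/c̄, 1/dᵢ) for every i. Define λ* by λᵢ* = min(1/c̄, 1/dᵢ). Then λ* belongs to the feasible set F = {λ : Fin r → ℝ | λ₁ ≤ λ₂ ≤ ⋯ ≤ λ_r and ε ≤ λᵢ ≤ 1/c̄ for all i}, and for every λ ∈ F one has Σᵢ dᵢ λᵢ* − Σᵢ log λᵢ* ≤ Σᵢ dᵢ λᵢ − Σᵢ log λᵢ. -/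
/-! `x ↦ d x - log x` is convex on `(0, ∞)`, so the objective separates into scalar problems
whose minimizers over `(0, 1/c̄]` are `min (1/c̄) (1/dᵢ)`. These already satisfy the ordering
constraint because `d` is decreasing, so dropping that constraint loses nothing. -/

open Finset Real

/-- First-order optimality for the convex function `x ↦ a x - log x`:
`(a - 1/m)` is its derivative at `m`. -/
lemma mul_sub_log_le_of_deriv_mul_sub_nonneg {a m x : ℝ} (hm : 0 < m) (hx : 0 < x)
    (h : 0 ≤ (a - 1 / m) * (x - m)) :
    a * m - log m ≤ a * x - log x := by
  have hlog : log (x / m) ≤ x / m - 1 := log_le_sub_one_of_pos (div_pos hx hm)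
  rw [log_div hx.ne' hm.ne'] at hlog
  have htangent : x / m - 1 = 1 / m * (x - m) := by field_simp
  nlinarith

lemma mul_min_sub_log_min_le {a b x : ℝ} (ha : 0 < a) (hb : 0 < b) (hx : 0 < x) (hxb : x ≤ b) :
    a * min b (1 / a) - log (min b (1 / a)) ≤ a * x - log x := by
  apply mul_sub_log_le_of_deriv_mul_sub_nonneg (lt_min hb (one_div_pos.2 ha)) hx
  rcases le_total b (1 / a) with hba | hab
  · rw [min_eq_left hba]
    have : a ≤ 1 / b := (le_one_div ha hb).2 hba
    nlinarith
  · rw [min_eq_right hab, one_div_one_div, sub_self, zero_mul]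

theorem rcml_lb_inner_closed_form_general
    (r : ℕ) (d : Fin r → ℝ)
    (hd_desc : ∀ i j : Fin r, i ≤ j → d j ≤ d i)
    (hd_pos : ∀ i, 0 < d i)
    (cbar : ℝ) (hcbar : 0 < cbar)
    (ε : ℝ) (hε : 0 < ε) (hεle : ∀ i, ε ≤ min (1 / cbar) (1 / d i)) :
    ((∀ i j : Fin r, i ≤ j →
        min (1 / cbar) (1 / d i) ≤ min (1 / cbar) (1 / d j)) ∧
      (∀ i, ε ≤ min (1 / cbar) (1 / d i) ∧ min (1 / cbar) (1 / d i) ≤ 1 / cbar)) ∧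
    ∀ l : Fin r → ℝ,
      ((∀ i j : Fin r, i ≤ j → l i ≤ l j) ∧ (∀ i, ε ≤ l i ∧ l i ≤ 1 / cbar)) →
      (∑ i, d i * min (1 / cbar) (1 / d i)) -
          (∑ i, Real.log (min (1 / cbar) (1 / d i))) ≤
        (∑ i, d i * l i) - (∑ i, Real.log (l i)) := by
  refine ⟨⟨fun i j hij => ?_, fun i => ⟨hεle i, min_le_left _ _⟩⟩, fun l ⟨_, hbox⟩ => ?_⟩
  · exact min_le_min le_rfl (one_div_le_one_div_of_le (hd_pos j) (hd_desc i j hij))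
  · rw [← sum_sub_distrib, ← sum_sub_distrib]
    exact sum_le_sum fun i _ => mul_min_sub_log_min_le (hd_pos i) (one_div_pos.2 hcbar)
      (hε.trans_le (hbox i).1) (hbox i).2

/-- Inner solution of the RCML_LB problem for fixed noise level `c̄`:
`λᵢ* = min(1/c̄, 1/dᵢ)` is feasible and globally minimizes
`λ ↦ Σᵢ dᵢλᵢ − Σᵢ log λᵢ` over `{λ | λ₁ ≤ ⋯ ≤ λ_r, ε ≤ λᵢ ≤ 1/c̄}`. -/
theorem rcml_lb_inner_closed_form
    (r : ℕ) (hr : 1 ≤ r) (d : Fin r → ℝ)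
    (hd_desc : ∀ i j : Fin r, i ≤ j → d j ≤ d i)
    (hd_pos : ∀ i, 0 < d i)
    (cbar : ℝ) (hcbar : 0 < cbar)
    (ε : ℝ) (hε : 0 < ε) (hεle : ∀ i, ε ≤ min (1 / cbar) (1 / d i)) :
    ((∀ i j : Fin r, i ≤ j →
        min (1 / cbar) (1 / d i) ≤ min (1 / cbar) (1 / d j)) ∧
      (∀ i, ε ≤ min (1 / cbar) (1 / d i) ∧ min (1 / cbar) (1 / d i) ≤ 1 / cbar)) ∧
    ∀ l : Fin r → ℝ,
      ((∀ i j : Fin r, i ≤ j → l i ≤ l j) ∧ (∀ i, ε ≤ l i ∧ l i ≤ 1 / cbar)) →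
      (∑ i, d i * min (1 / cbar) (1 / d i)) -
          (∑ i, Real.log (min (1 / cbar) (1 / d i))) ≤
        (∑ i, d i * l i) - (∑ i, Real.log (l i)) :=
  rcml_lb_inner_closed_form_general r d hd_desc hd_pos cbar hcbar ε hε hεle
end

section
/- Let N > r ≥ 1 be integers, d : Fin N → ℝ with d₁ ≥ d₂ ≥ ⋯ ≥ d_N > 0, and ĉ > 0. For c > 0 define Gᵢ(c) = 1 + log dᵢ if c ≤ dᵢ and Gᵢ(c) = dᵢ/c + log c if c > dᵢ, for i = 1,…,r; and Gᵢ(c) = dᵢ/c + log c for i = r+1,…,N. Let d̂ = (Σ_{i=r+1}^N dᵢ)/(N−r) and set c* = ĉ if ĉ > d̂ and c* = d̂ if ĉ ≤ d̂. Then c* minimizes G(c) = Σ_{i=1}^N Gᵢ(c) over {c : c ≥ ĉ}, i.e., G(c*) ≤ G(c) for all c ≥ ĉ. -/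
/-!
With `nll a c = a / c + log c`, which on `c > 0` decreases to its minimum `1 + log a` at `c = a`
and increases afterwards, the clipped term is `Gᵢ(c) = nll dᵢ (max c dᵢ)` and the tail sum is
`(N - r) * nll d̂ c`. Hence every term of `G` is nondecreasing on `[d̂, ∞)`, and since the
eigenvalues are sorted, `d̂ ≤ dᵢ` for `i < r`, so every term is minimal at `c = d̂`.
-/

open Finset Real

theorem Fin.card_filter_le_val (N r : ℕ) : #{i : Fin N | r ≤ (i : ℕ)} = N - r := by
  have := card_filter_add_card_filter_not (s := univ) (fun i : Fin N => (i : ℕ) < r)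
  simp only [Fin.card_filter_val_lt, not_lt, card_univ, Fintype.card_fin] at this
  omega

theorem Fin.cast_card_filter_le_val {N r : ℕ} (hrN : r ≤ N) :
    (#{i : Fin N | r ≤ (i : ℕ)} : ℝ) = N - r := by
  rw [Fin.card_filter_le_val, Nat.cast_sub hrN]

theorem mean_tail_le_of_antitone {N r : ℕ} (hrN : r < N) {d : Fin N → ℝ} (hd : Antitone d)
    {i : Fin N} (hi : (i : ℕ) < r) :
    (∑ j ∈ {j : Fin N | r ≤ (j : ℕ)}, d j) / ((N : ℝ) - r) ≤ d i := by
  have hNr : (0 : ℝ) < N - r := sub_pos.mpr (by exact_mod_cast hrN)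
  rw [div_le_iff₀ hNr, mul_comm, ← Fin.cast_card_filter_le_val hrN.le, ← nsmul_eq_mul]
  refine sum_le_card_nsmul _ _ _ fun j hj => hd ?_
  simp only [mem_filter, mem_univ, true_and] at hj
  exact Fin.le_def.mpr (by omega)

namespace RCML

noncomputable def nll (a c : ℝ) : ℝ := a / c + log c

variable {a c c₁ c₂ : ℝ}

theorem nll_self_le (ha : 0 < a) (hc : 0 < c) : nll a a ≤ nll a c := by
  have h := log_le_sub_one_of_pos (div_pos ha hc)
  rw [log_div ha.ne' hc.ne'] at h
  rw [nll, nll, div_self ha.ne']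
  linarith

theorem nll_mono (hc₁ : 0 < c₁) (hac₁ : a ≤ c₁) (h₁₂ : c₁ ≤ c₂) : nll a c₁ ≤ nll a c₂ := by
  have hc₂ : 0 < c₂ := hc₁.trans_le h₁₂
  have hlog : 1 - c₁ / c₂ ≤ log c₂ - log c₁ := by
    simpa [log_div hc₂.ne' hc₁.ne'] using one_sub_inv_le_log_of_pos (div_pos hc₂ hc₁)
  have hgap : a / c₁ - a / c₂ - (1 - c₁ / c₂) = -((c₂ - c₁) * (c₁ - a) / (c₁ * c₂)) := by
    field_simp; ring
  have : 0 ≤ (c₂ - c₁) * (c₁ - a) / (c₁ * c₂) := by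
    apply div_nonneg (mul_nonneg _ _) (mul_pos hc₁ hc₂).le <;> linarith
  rw [nll, nll]; linarith

theorem ite_eq_nll_max (hc : 0 < c) :
    (if c ≤ a then 1 + log a else a / c + log c) = nll a (max c a) := by
  split_ifs with h
  · rw [max_eq_right h, nll, div_self (hc.trans_le h).ne']
  · rw [max_eq_left (le_of_not_ge h), nll]

theorem sum_nll {ι : Type*} (s : Finset ι) (hs : s.Nonempty) (d : ι → ℝ) (c : ℝ) :
    ∑ i ∈ s, nll (d i) c = #s * nll ((∑ i ∈ s, d i) / #s) c := by
  have : (#s : ℝ) ≠ 0 := by exact_mod_cast hs.card_pos.ne'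
  simp only [nll, sum_add_distrib, sum_const, nsmul_eq_mul, ← sum_div]
  field_simp

theorem sum_ite_eq_sum_nll_max_add_mul_nll {N r : ℕ} (hrN : r < N) (d : Fin N → ℝ) {c : ℝ}
    (hc : 0 < c) :
    (∑ i : Fin N, if (i : ℕ) < r then
        (if c ≤ d i then 1 + log (d i) else d i / c + log c) else d i / c + log c) =
      ∑ i ∈ {i : Fin N | (i : ℕ) < r}, nll (d i) (max c (d i)) +
        ((N : ℝ) - r) * nll ((∑ i ∈ {i : Fin N | r ≤ (i : ℕ)}, d i) / ((N : ℝ) - r)) c := by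
  have htail : ({i : Fin N | r ≤ (i : ℕ)} : Finset (Fin N)).Nonempty := ⟨⟨r, hrN⟩, by simp⟩
  rw [sum_ite, ← Fin.cast_card_filter_le_val hrN.le, ← sum_nll _ htail]
  simp only [not_lt, ite_eq_nll_max hc]
  rfl

end RCML

theorem rcml_lb_optimal_noise_level_general
    (N r : ℕ) (hrN : r < N) (d : Fin N → ℝ)
    (hd_desc : ∀ i j : Fin N, i ≤ j → d j ≤ d i)
    (chat : ℝ) (hchat : 0 < chat) :
    let G : ℝ → ℝ := fun c => ∑ i : Fin N,
      (if (i : ℕ) < r then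
        (if c ≤ d i then 1 + Real.log (d i) else d i / c + Real.log c)
      else d i / c + Real.log c)
    let dhat : ℝ :=
      (∑ i ∈ Finset.univ.filter (fun i : Fin N => r ≤ (i : ℕ)), d i) / ((N : ℝ) - r)
    let cstar : ℝ := if dhat < chat then chat else dhat
    chat ≤ cstar ∧ ∀ c : ℝ, chat ≤ c → G cstar ≤ G c := by
  intro G dhat cstar
  have hNr : (0 : ℝ) ≤ N - r := sub_nonneg.mpr (by exact_mod_cast hrN.le)
  have hG : ∀ c, 0 < c → G c = ∑ i ∈ {i : Fin N | (i : ℕ) < r}, RCML.nll (d i) (max c (d i)) +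
      ((N : ℝ) - r) * RCML.nll dhat c := fun c hc =>
    RCML.sum_ite_eq_sum_nll_max_add_mul_nll hrN d hc
  by_cases h : dhat < chat
  · have hcstar : cstar = chat := if_pos h
    refine ⟨hcstar.ge, fun c hc => ?_⟩
    rw [hcstar, hG chat hchat, hG c (hchat.trans_le hc)]
    gcongr with i
    · exact RCML.nll_mono (lt_max_of_lt_left hchat) (le_max_right _ _) (max_le_max_right _ hc)
    · exact RCML.nll_mono hchat h.le hc
  · have hcstar : cstar = dhat := if_neg h
    have hdhat : 0 < dhat := hchat.trans_le (not_lt.mp h)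
    refine ⟨hcstar ▸ not_lt.mp h, fun c hc => ?_⟩
    have hc0 : 0 < c := hchat.trans_le hc
    rw [hcstar, hG dhat hdhat, hG c hc0]
    gcongr with i hi
    · have hdi : dhat ≤ d i := mean_tail_le_of_antitone hrN hd_desc (by simpa using hi)
      rw [max_eq_right hdi]
      exact RCML.nll_self_le (hdhat.trans_le hdi) (lt_max_of_lt_left hc0)
    · exact RCML.nll_self_le hdhat hc0

/-- Lemma 3.2: closed-form optimal noise level in the RCML_LB estimator.
With `d̂` the mean of the `N − r` smallest eigenvalues, the minimizer of
`G(c) = Σᵢ Gᵢ(c)` over `{c : c ≥ ĉ}` is `c* = max(ĉ, d̂)` (equal to `ĉ` when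
`ĉ > d̂` and to `d̂` when `ĉ ≤ d̂`). -/
theorem rcml_lb_optimal_noise_level
    (N r : ℕ) (hr : 1 ≤ r) (hrN : r < N) (d : Fin N → ℝ)
    (hd_desc : ∀ i j : Fin N, i ≤ j → d j ≤ d i)
    (hd_pos : ∀ i, 0 < d i)
    (chat : ℝ) (hchat : 0 < chat) :
    let G : ℝ → ℝ := fun c => ∑ i : Fin N,
      (if (i : ℕ) < r then
        (if c ≤ d i then 1 + Real.log (d i) else d i / c + Real.log c)
      else d i / c + Real.log c)
    let dhat : ℝ :=
      (∑ i ∈ Finset.univ.filter (fun i : Fin N => r ≤ (i : ℕ)), d i) / ((N : ℝ) - r)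
    let cstar : ℝ := if dhat < chat then chat else dhat
    chat ≤ cstar ∧ ∀ c : ℝ, chat ≤ c → G cstar ≤ G c :=
  rcml_lb_optimal_noise_level_general N r hrN d hd_desc chat hchat
end

section
/- Let N ≥ 1 be an integer, σ² > 0, and d : Fin N → ℝ with dₖ > 0 for all k. For 0 ≤ i ≤ N define lr(i) = exp(N) · σ^{−2(N−i)} · (Π_{k=i+1}^N d_k) / exp(i + σ^{−2} Σ_{k=i+1}^N d_k). Then lr is monotone nondecreasing: lr(i) ≤ lr(i+1) for all 0 ≤ i < N. -/
/-!
Passing from rank `i` to `i + 1` removes `d i` from the tail product and sum, which multiplies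
the likelihood ratio by `x⁻¹ * exp (x - 1)` with `x = d i / σ²`; this factor is at least `1`
because `x ≤ exp (x - 1)`.
-/

open Real Finset

lemma Fin.filter_le_eq_insert {N i : ℕ} (hi : i < N) :
    univ.filter (fun k : Fin N => i ≤ (k : ℕ)) =
      insert ⟨i, hi⟩ (univ.filter (fun k : Fin N => i + 1 ≤ (k : ℕ))) := by
  ext k
  simp only [mem_filter, mem_univ, true_and, mem_insert, Fin.ext_iff]
  omega

lemma one_le_inv_mul_exp_sub_one {x : ℝ} (hx : 0 < x) : 1 ≤ x⁻¹ * exp (x - 1) := by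
  rw [le_inv_mul_iff₀ hx, mul_one]
  linarith [add_one_le_exp (x - 1)]

noncomputable def rcmlLikelihoodRatio (N : ℕ) (σ2 : ℝ) (d : Fin N → ℝ) (i : ℕ) : ℝ :=
  exp N * (σ2 ^ (N - i))⁻¹ * (∏ k ∈ univ.filter (fun k : Fin N => i ≤ (k : ℕ)), d k) /
    exp ((i : ℝ) + σ2⁻¹ * ∑ k ∈ univ.filter (fun k : Fin N => i ≤ (k : ℕ)), d k)

section

variable {N : ℕ} {σ2 : ℝ} {d : Fin N → ℝ}

lemma rcmlLikelihoodRatio_nonneg (hσ2 : 0 < σ2) (hd : ∀ k, 0 < d k) (i : ℕ) :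
    0 ≤ rcmlLikelihoodRatio N σ2 d i := by
  have : 0 < ∏ k ∈ univ.filter (fun k : Fin N => i ≤ (k : ℕ)), d k :=
    prod_pos fun k _ => hd k
  unfold rcmlLikelihoodRatio
  positivity

lemma rcmlLikelihoodRatio_succ {i : ℕ} (hi : i < N) (hσ2 : σ2 ≠ 0) (hdi : d ⟨i, hi⟩ ≠ 0) :
    rcmlLikelihoodRatio N σ2 d (i + 1) = rcmlLikelihoodRatio N σ2 d i *
      ((σ2⁻¹ * d ⟨i, hi⟩)⁻¹ * exp (σ2⁻¹ * d ⟨i, hi⟩ - 1)) := by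
  have hnotmem : (⟨i, hi⟩ : Fin N) ∉ univ.filter (fun k : Fin N => i + 1 ≤ (k : ℕ)) := by
    simp
  have hpow : σ2 ^ (N - i) = σ2 ^ (N - (i + 1)) * σ2 := by
    rw [← pow_succ]
    congr 1
    omega
  simp only [rcmlLikelihoodRatio, Fin.filter_le_eq_insert hi, prod_insert hnotmem,
    sum_insert hnotmem, hpow]
  set S := ∑ k ∈ univ.filter (fun k : Fin N => i + 1 ≤ (k : ℕ)), d k
  have hexp : exp ((i : ℝ) + σ2⁻¹ * (d ⟨i, hi⟩ + S)) =
      exp (((i + 1 : ℕ) : ℝ) + σ2⁻¹ * S) * exp (σ2⁻¹ * d ⟨i, hi⟩ - 1) := by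
    rw [← exp_add]
    push_cast
    ring_nf
  rw [hexp]
  field_simp

end

theorem lr_monotone_in_rank_general
    (N : ℕ) (σ2 : ℝ) (hσ2 : 0 < σ2)
    (d : Fin N → ℝ) (hd : ∀ k, 0 < d k) :
    let lr : ℕ → ℝ := fun i =>
      Real.exp N * (σ2 ^ (N - i))⁻¹ *
        (∏ k ∈ Finset.univ.filter (fun k : Fin N => i ≤ (k : ℕ)), d k) /
        Real.exp ((i : ℝ) + σ2⁻¹ *
          ∑ k ∈ Finset.univ.filter (fun k : Fin N => i ≤ (k : ℕ)), d k)
    ∀ i : ℕ, i < N → lr i ≤ lr (i + 1) := by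
  intro lr i hi
  change rcmlLikelihoodRatio N σ2 d i ≤ rcmlLikelihoodRatio N σ2 d (i + 1)
  rw [rcmlLikelihoodRatio_succ hi hσ2.ne' (hd _).ne']
  exact le_mul_of_one_le_right (rcmlLikelihoodRatio_nonneg hσ2 hd i)
    (one_le_inv_mul_exp_sub_one (by have := hd ⟨i, hi⟩; positivity))

/-- Lemma 1 of the expected-likelihood chapter: the likelihood-ratio value of the
RCML estimator is monotone nondecreasing in the assumed clutter rank. -/
theorem lr_monotone_in_rank
    (N : ℕ) (hN : 1 ≤ N) (σ2 : ℝ) (hσ2 : 0 < σ2)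
    (d : Fin N → ℝ) (hd : ∀ k, 0 < d k) :
    let lr : ℕ → ℝ := fun i =>
      Real.exp N * (σ2 ^ (N - i))⁻¹ *
        (∏ k ∈ Finset.univ.filter (fun k : Fin N => i ≤ (k : ℕ)), d k) /
        Real.exp ((i : ℝ) + σ2⁻¹ *
          ∑ k ∈ Finset.univ.filter (fun k : Fin N => i ≤ (k : ℕ)), d k)
    ∀ i : ℕ, i < N → lr i ≤ lr (i + 1) :=
  lr_monotone_in_rank_general N σ2 hσ2 d hd
end
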